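/- Let m ≥ 2 be an even integer, and let λ be the unique real root of x^{m+1} = 2x^m − 2x + 2. Then every complex root z of z^{m+1} − 2z^m + 2z − 2 = 0 other than λ satisfies |z| < 3/2 < λ; in particular λ is the unique root of largest absolute value. -/

import Mathlib

/-!
Since `λᵐ ≥ λ²`, the root equation `λᵐ (2 - λ) = 2(λ - 1)` forces `λ³ - 2λ² + 2λ - 2 ≥ 0`, and
this cubic is negative on `(1, 3/2]`; so `λ > 3/2`.
Dividing `λ f` by `z - λ` shows that every other root satisfies `λ zᵐ = ∑_{i<m} cᵢ zⁱ` with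
`c₀ = -2` and `cᵢ = (2 - λ) λ^(m-i)` for `i ≥ 1`. By Cauchy's bound such a `z` has `‖z‖ < ρ` as soon
as `∑ |cᵢ| ρⁱ < λ ρᵐ`. At `ρ = 3/2 < λ` every term with `i ≥ 1` is at most `(2 - λ) λᵐ = 2(λ - 1)`,
and `2 + 2(m - 1)(λ - 1) ≤ λ m < λ (3/2)ᵐ`.
-/

open Finset

theorem norm_lt_of_mul_pow_eq_sum {K : Type*} [NormedDivisionRing K] {a z : K} {c : ℕ → K}
    {n : ℕ} {ρ : ℝ} (hρ : 0 < ρ) (hz : a * z ^ n = ∑ i ∈ range n, c i * z ^ i)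
    (hc : ∑ i ∈ range n, ‖c i‖ * ρ ^ i < ‖a‖ * ρ ^ n) : ‖z‖ < ρ := by
  by_contra! hρz
  set r := ‖z‖
  have hr : 0 < r := hρ.trans_le hρz
  have h_norm : ‖a‖ * r ^ n ≤ ∑ i ∈ range n, ‖c i‖ * r ^ i := by
    calc ‖a‖ * r ^ n = ‖∑ i ∈ range n, c i * z ^ i‖ := by rw [← hz, norm_mul, norm_pow]
      _ ≤ ∑ i ∈ range n, ‖c i * z ^ i‖ := norm_sum_le _ _
      _ = ∑ i ∈ range n, ‖c i‖ * r ^ i := by simp only [norm_mul, norm_pow, r]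
  -- `∑ ‖cᵢ‖ rⁱ / rⁿ` is antitone in `r`
  have h_scale : (∑ i ∈ range n, ‖c i‖ * r ^ i) * ρ ^ n ≤
      (∑ i ∈ range n, ‖c i‖ * ρ ^ i) * r ^ n := by
    rw [sum_mul, sum_mul]
    refine sum_le_sum fun i hi => ?_
    have hin : i ≤ n := (mem_range.1 hi).le
    have h_pow : ρ ^ (n - i) ≤ r ^ (n - i) := pow_le_pow_left₀ hρ.le hρz _
    calc ‖c i‖ * r ^ i * ρ ^ n = ‖c i‖ * (r ^ i * ρ ^ i) * ρ ^ (n - i) := by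
          rw [← pow_mul_pow_sub ρ hin]; ring
      _ ≤ ‖c i‖ * (r ^ i * ρ ^ i) * r ^ (n - i) := by gcongr
      _ = ‖c i‖ * ρ ^ i * r ^ n := by rw [← pow_mul_pow_sub r hin]; ring
  have := mul_le_mul_of_nonneg_right h_norm (pow_pos hρ n).le
  have := mul_lt_mul_of_pos_right hc (pow_pos hr n)
  linarith

/-- For a root `l` of `f = X^(m+1) - 2Xᵐ + 2X - 2`, the quotient `l f / (X - l)` is
`l Xᵐ - ∑_{i<m} deflatedCoeff l m i * Xⁱ`. -/
def deflatedCoeff {R : Type*} [Ring R] (l : R) (m i : ℕ) : R :=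
  if i = 0 then -2 else (2 - l) * l ^ (m - i)

theorem map_deflatedCoeff {R S : Type*} [Ring R] [Ring S] (f : R →+* S) (l : R) (m i : ℕ) :
    f (deflatedCoeff l m i) = deflatedCoeff (f l) m i := by
  unfold deflatedCoeff
  split_ifs <;> simp [map_ofNat]

theorem mul_pow_eq_sum_deflatedCoeff {R : Type*} [CommRing R] [NoZeroDivisors R] {l z : R}
    {m : ℕ} (hm : m ≠ 0) (hl : l ^ (m + 1) - 2 * l ^ m + 2 * l - 2 = 0)
    (hz : z ^ (m + 1) - 2 * z ^ m + 2 * z - 2 = 0) (hne : z ≠ l) :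
    l * z ^ m = ∑ i ∈ range m, deflatedCoeff l m i * z ^ i := by
  obtain ⟨k, rfl⟩ : ∃ k, m = k + 1 := ⟨m - 1, by omega⟩
  have h_tele : (z - l) * ∑ i ∈ range k, l ^ (k - i) * z ^ (i + 1) =
      l * z ^ (k + 1) - l ^ (k + 1) * z := by
    rw [mul_sum]
    convert sum_range_sub (fun i => l ^ (k + 1 - i) * z ^ (i + 1)) k using 1
    · refine sum_congr rfl fun i hi => ?_
      rw [show k + 1 - i = k - i + 1 by have := mem_range.1 hi; omega]
      simp only [Nat.add_sub_add_right]
      ring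
    · simp
  have h_sum : ∑ i ∈ range (k + 1), deflatedCoeff l (k + 1) i * z ^ i =
      (2 - l) * ∑ i ∈ range k, l ^ (k - i) * z ^ (i + 1) - 2 := by
    simp [sum_range_succ', deflatedCoeff, mul_sum, mul_assoc, sub_eq_add_neg]
  have h_prod : (z - l) *
      (l * z ^ (k + 1) - ∑ i ∈ range (k + 1), deflatedCoeff l (k + 1) i * z ^ i) = 0 := by
    rw [h_sum]
    linear_combination -(2 - l) * h_tele + l * hz - z * hl
  exact sub_eq_zero.1 ((mul_eq_zero.1 h_prod).resolve_left (sub_ne_zero.2 hne))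

theorem nat_lt_three_halves_pow {n : ℕ} (hn : 2 ≤ n) : (n : ℝ) < (3 / 2) ^ n := by
  induction n, hn using Nat.le_induction with
  | base => norm_num
  | succ k hk ih =>
    have hk2 : (2 : ℝ) ≤ k := by exact_mod_cast hk
    push_cast
    calc (k : ℝ) + 1 ≤ 3 / 2 * k := by linarith
      _ < 3 / 2 * (3 / 2) ^ k := by gcongr
      _ = (3 / 2) ^ (k + 1) := by ring

theorem pow_mul_two_sub_eq {R : Type*} [CommRing R] {l : R} {m : ℕ}
    (hl : l ^ (m + 1) - 2 * l ^ m + 2 * l - 2 = 0) : l ^ m * (2 - l) = 2 * (l - 1) := by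
  linear_combination -hl + pow_succ l m

theorem three_halves_lt_of_root {l : ℝ} {m : ℕ} (hm : 2 ≤ m) (h1 : 1 < l) (h2 : l < 2)
    (hl : l ^ (m + 1) - 2 * l ^ m + 2 * l - 2 = 0) : 3 / 2 < l := by
  by_contra! h
  have h_sq : l ^ 2 * (2 - l) ≤ 2 * (l - 1) := by
    rw [← pow_mul_two_sub_eq hl]
    gcongr
    linarith
  nlinarith [mul_nonneg (sub_nonneg.2 h) (sq_nonneg (l - 1 / 4))]

theorem sum_abs_deflatedCoeff_mul_lt {l : ℝ} {m : ℕ} (hm : 2 ≤ m) (h32 : 3 / 2 < l)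
    (h2 : l < 2) (hl : l ^ (m + 1) - 2 * l ^ m + 2 * l - 2 = 0) :
    ∑ i ∈ range m, |deflatedCoeff l m i| * (3 / 2) ^ i < l * (3 / 2) ^ m := by
  have h_key := pow_mul_two_sub_eq hl
  have h2l : 0 ≤ 2 - l := by linarith
  obtain ⟨k, rfl⟩ : ∃ k, m = k + 1 := ⟨m - 1, by omega⟩
  have h_term : ∀ i ∈ range k, |deflatedCoeff l (k + 1) (i + 1)| * (3 / 2) ^ (i + 1) ≤
      l ^ (k + 1) * (2 - l) := by
    intro i hi
    have hik : i + 1 ≤ k + 1 := by have := mem_range.1 hi; omega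
    rw [deflatedCoeff, if_neg (Nat.succ_ne_zero i), abs_of_nonneg (by positivity),
      ← pow_sub_mul_pow l hik]
    calc (2 - l) * l ^ (k + 1 - (i + 1)) * (3 / 2) ^ (i + 1)
        ≤ (2 - l) * l ^ (k + 1 - (i + 1)) * l ^ (i + 1) := by gcongr
      _ = _ := by ring
  have h_pow := nat_lt_three_halves_pow hm
  have hk : (1 : ℝ) ≤ k := by exact_mod_cast (show 1 ≤ k by omega)
  calc ∑ i ∈ range (k + 1), |deflatedCoeff l (k + 1) i| * (3 / 2) ^ i
      ≤ k * (l ^ (k + 1) * (2 - l)) + 2 := by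
        rw [sum_range_succ']
        gcongr
        · simpa using sum_le_card_nsmul _ _ _ h_term
        · norm_num [deflatedCoeff]
    _ ≤ l * (k + 1) := by rw [h_key]; nlinarith
    _ < l * (3 / 2) ^ (k + 1) := by push_cast at h_pow; gcongr

theorem stmt_9 (m : ℕ) (hm : 2 ≤ m) (lam : ℝ)
    (hlam : lam ∈ Set.Ioo (1 : ℝ) 2)
    (hroot : lam ^ (m + 1) - 2 * lam ^ m + 2 * lam - 2 = 0) :
    (3 : ℝ) / 2 < lam ∧
    ∀ z : ℂ, z ^ (m + 1) - 2 * z ^ m + 2 * z - 2 = 0 → z ≠ (lam : ℂ) →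
      ‖z‖ < 3 / 2 := by
  have h32 := three_halves_lt_of_root hm hlam.1 hlam.2 hroot
  refine ⟨h32, fun z hz hne => ?_⟩
  have hrootC : (lam : ℂ) ^ (m + 1) - 2 * (lam : ℂ) ^ m + 2 * lam - 2 = 0 := by
    exact_mod_cast hroot
  have h_coeff (i : ℕ) : ‖deflatedCoeff (lam : ℂ) m i‖ = |deflatedCoeff lam m i| := by
    rw [← Complex.ofRealHom_eq_coe, ← map_deflatedCoeff, Complex.ofRealHom_eq_coe,
      Complex.norm_real, Real.norm_eq_abs]
  refine norm_lt_of_mul_pow_eq_sum (by norm_num)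
    (mul_pow_eq_sum_deflatedCoeff (by omega) hrootC hz hne) ?_
  simpa only [h_coeff, Complex.norm_real, Real.norm_eq_abs, abs_of_pos (by linarith : 0 < lam)]
    using sum_abs_deflatedCoeff_mul_lt hm h32 hlam.2 hroot
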